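/- Let f = a_0 + a_1 x + ... + a_n x^n ∈ ℤ[x] be a primitive polynomial with a_n ≠ 0, and let H_f = max over 0 ≤ i ≤ n-1 of |a_i|/|a_n|. If there exist positive integers d and m with m ≥ H_f + d + 1 and a prime p with p not dividing d such that f(m) = ±d·p, then f is irreducible over ℚ. -/

import Mathlib

open Polynomial

noncomputable def Complex.abs : AbsoluteValue ℂ ℝ := NormedField.toAbsoluteValue ℂ

theorem Complex.abs_def (z : ℂ) : Complex.abs z = ‖z‖ := rfl

theorem Complex.abs_intCast (k : ℤ) : Complex.abs (k : ℂ) = |(k : ℝ)| := by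
  rw [Complex.abs_def, Complex.norm_intCast]

theorem Complex.abs_natCast (k : ℕ) : Complex.abs (k : ℂ) = (k : ℝ) := by
  rw [Complex.abs_def, Complex.norm_natCast]

theorem girstmair_criterion (f : Polynomial ℤ) (n : ℕ) (hn : f.natDegree = n) (hdeg : 1 ≤ n)
    (han : f.coeff n ≠ 0) (hprim : f.IsPrimitive)
    (H : ℝ)
    (hH : H = (Finset.range n).sup' (Finset.nonempty_range_iff.mpr (by omega))
      (fun i => (|f.coeff i| : ℝ) / (|f.coeff n| : ℝ)))
    (d m : ℕ) (hd : 0 < d) (hm0 : 0 < m)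
    (hm : (m : ℝ) ≥ H + d + 1)
    (p : ℕ) (hp : p.Prime) (hpd : ¬ p ∣ d)
    (hval : f.eval (m : ℤ) = (d : ℤ) * p ∨ f.eval (m : ℤ) = -((d : ℤ) * p)) :
    Irreducible (f.map (Int.castRingHom ℚ)) := by
  have hf0 : f ≠ 0 := fun h => han (by simp [h])
  have hanR : (0:ℝ) < |(f.coeff n : ℝ)| := by
    have : (f.coeff n : ℝ) ≠ 0 := by exact_mod_cast han
    exact abs_pos.mpr this
  have hinj : Function.Injective (Int.castRingHom ℂ) := fun a b hab => by
    simpa using hab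
  set F := f.map (Int.castRingHom ℂ) with hF
  have hFdeg : F.natDegree = n := by
    rw [hF, natDegree_map_eq_of_injective hinj, hn]
  have hF0 : F ≠ 0 := by
    rw [hF, Ne, Polynomial.map_eq_zero_iff hinj]; exact hf0
  -- coefficient bound from H
  have hHle : ∀ i < n, |(f.coeff i : ℝ)| ≤ H * |(f.coeff n : ℝ)| := by
    intro i hi
    have h1 : (|f.coeff i| : ℝ) / (|f.coeff n| : ℝ) ≤ H := by
      rw [hH]
      exact Finset.le_sup' (fun i => (|f.coeff i| : ℝ) / (|f.coeff n| : ℝ))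
        (Finset.mem_range.mpr hi)
    rw [div_le_iff₀ hanR] at h1
    linarith [h1]
  have hH0 : 0 ≤ H := by
    have h1 : (|f.coeff 0| : ℝ) / (|f.coeff n| : ℝ) ≤ H := by
      rw [hH]
      exact Finset.le_sup' (fun i => (|f.coeff i| : ℝ) / (|f.coeff n| : ℝ))
        (Finset.mem_range.mpr hdeg)
    have h2 : (0:ℝ) ≤ (|f.coeff 0| : ℝ) / (|f.coeff n| : ℝ) := by positivity
    linarith
  have hmd : H + 1 ≤ (m:ℝ) - d := by linarith
  -- every complex root of f is small
  have hroot : ∀ z : ℂ, F.eval z = 0 → Complex.abs z < (m:ℝ) - d := by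
    intro z hz
    by_contra hcon
    push_neg at hcon
    set r := Complex.abs z with hr
    have hr1 : H + 1 ≤ r := le_trans hmd hcon
    have hr0 : (0:ℝ) ≤ r := Complex.abs.nonneg z
    have hsum : ∑ i ∈ Finset.range (n+1), (f.coeff i : ℂ) * z ^ i = 0 := by
      have h1 := Polynomial.eval_eq_sum_range (p := F) z
      rw [hFdeg] at h1
      rw [← hz, h1]
      refine Finset.sum_congr rfl fun i _ => ?_
      rw [hF, Polynomial.coeff_map]
      rfl
    rw [Finset.sum_range_succ] at hsum
    have heq : (f.coeff n : ℂ) * z ^ n = -∑ i ∈ Finset.range n, (f.coeff i : ℂ) * z ^ i := by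
      linear_combination hsum
    have habs : |(f.coeff n : ℝ)| * r ^ n ≤
        ∑ i ∈ Finset.range n, |(f.coeff i : ℝ)| * r ^ i := by
      calc |(f.coeff n : ℝ)| * r ^ n = Complex.abs ((f.coeff n : ℂ) * z ^ n) := by
            rw [map_mul, map_pow, Complex.abs_intCast]
        _ = Complex.abs (∑ i ∈ Finset.range n, (f.coeff i : ℂ) * z ^ i) := by
            rw [heq, map_neg_eq_map]
        _ ≤ ∑ i ∈ Finset.range n, Complex.abs ((f.coeff i : ℂ) * z ^ i) :=
            Complex.abs.sum_le _ _
        _ = ∑ i ∈ Finset.range n, |(f.coeff i : ℝ)| * r ^ i := by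
            refine Finset.sum_congr rfl fun i _ => ?_
            rw [map_mul, map_pow, Complex.abs_intCast]
    set G := ∑ i ∈ Finset.range n, r ^ i with hG
    have hG0 : (0:ℝ) ≤ G := Finset.sum_nonneg fun i _ => pow_nonneg hr0 i
    have hsum2 : ∑ i ∈ Finset.range n, |(f.coeff i : ℝ)| * r ^ i ≤ H * |(f.coeff n : ℝ)| * G := by
      rw [hG, Finset.mul_sum]
      refine Finset.sum_le_sum fun i hi => ?_
      exact mul_le_mul_of_nonneg_right (hHle i (Finset.mem_range.mp hi)) (pow_nonneg hr0 i)
    have hgeom : G * (r - 1) = r ^ n - 1 := geom_sum_mul r n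
    have h3 : H * (|(f.coeff n : ℝ)| * G) ≤ (r - 1) * (|(f.coeff n : ℝ)| * G) :=
      mul_le_mul_of_nonneg_right (by linarith) (mul_nonneg hanR.le hG0)
    have h4 : (r - 1) * (|(f.coeff n : ℝ)| * G) = |(f.coeff n : ℝ)| * (r ^ n - 1) := by
      rw [← hgeom]; ring
    nlinarith [habs, hsum2, h3, h4, hanR]
  -- every nonconstant divisor of f is large at m
  have hdiv : ∀ q : Polynomial ℤ, q ∣ f → 1 ≤ q.natDegree → (d:ℝ) < |((q.eval (m:ℤ) : ℤ) : ℝ)| := by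
    intro q hqf hq1
    have hq0 : q ≠ 0 := fun h => by simp [h] at hq1
    set Q := q.map (Int.castRingHom ℂ) with hQ
    have hQ0 : Q ≠ 0 := by rw [hQ, Ne, Polynomial.map_eq_zero_iff hinj]; exact hq0
    have hsp : Q.Splits := IsAlgClosed.splits Q
    have hQdeg : Q.natDegree = q.natDegree := by rw [hQ, natDegree_map_eq_of_injective hinj]
    have hcard : Multiset.card Q.roots = q.natDegree := by
      rw [splits_iff_card_roots.mp hsp, hQdeg]
    have hQdvd : Q ∣ F := Polynomial.map_dvd _ hqf
    have hrootsQ : ∀ a ∈ Q.roots, (d:ℝ) < Complex.abs ((m:ℂ) - a) := by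
      intro a ha
      have haF : a ∈ F.roots := Multiset.mem_of_le (roots.le_of_dvd hF0 hQdvd) ha
      have haz : F.eval a = 0 := (Polynomial.mem_roots hF0).mp haF
      have h1 : Complex.abs a < (m:ℝ) - d := hroot a haz
      have h2 : Complex.abs ((m:ℂ)) - Complex.abs a ≤ Complex.abs ((m:ℂ) - a) :=
        Complex.abs.le_sub _ _
      have h3 : Complex.abs ((m:ℂ)) = (m:ℝ) := by
        rw [Complex.abs_natCast]
      linarith
    have heval : ((q.eval (m:ℤ) : ℤ) : ℂ) = Q.eval ((m:ℕ) : ℂ) := by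
      rw [hQ]
      have := Polynomial.eval_intCast_map (Int.castRingHom ℂ) q (m:ℤ)
      push_cast at this ⊢
      rw [this]
      rfl
    have hfact := hsp.eq_prod_roots
    have hevalprod : Q.eval ((m:ℕ):ℂ) = Q.leadingCoeff *
        (Q.roots.map (fun a => ((m:ℕ):ℂ) - a)).prod := by
      conv_lhs => rw [hfact]
      rw [eval_mul, eval_C, eval_multiset_prod, Multiset.map_map]
      simp
    have hlc : (1:ℝ) ≤ Complex.abs Q.leadingCoeff := by
      have h1 : Q.leadingCoeff = ((q.leadingCoeff : ℤ) : ℂ) := by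
        rw [hQ, Polynomial.leadingCoeff_map_of_injective hinj]; rfl
      rw [h1, Complex.abs_intCast]
      have h2 : (1:ℤ) ≤ |q.leadingCoeff| := Int.one_le_abs (leadingCoeff_ne_zero.mpr hq0)
      exact_mod_cast h2
    set T := Q.roots.map (fun a => Complex.abs (((m:ℕ):ℂ) - a)) with hT
    have hTmem : ∀ x ∈ T, (d:ℝ) < x := by
      intro x hx
      obtain ⟨a, ha, rfl⟩ := Multiset.mem_map.mp hx
      exact hrootsQ a ha
    have hd1 : (1:ℝ) ≤ (d:ℝ) := by exact_mod_cast hd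
    have hTprod : (d:ℝ) < T.prod := by
      have hTne : T ≠ 0 := by
        intro h
        have : Multiset.card T = 0 := by rw [h]; rfl
        rw [hT, Multiset.card_map, hcard] at this
        omega
      obtain ⟨x, hx⟩ := Multiset.exists_mem_of_ne_zero hTne
      obtain ⟨T', hT'⟩ := Multiset.exists_cons_of_mem hx
      rw [hT', Multiset.prod_cons]
      have h1x : (d:ℝ) < x := hTmem x hx
      have hT'1 : (1:ℝ) ≤ T'.prod := by
        refine Multiset.prod_induction _ _ (fun a b ha hb => ?_) le_rfl fun y hy => ?_
        · nlinarith
        · exact le_trans hd1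
            (le_of_lt (hTmem y (by rw [hT']; exact Multiset.mem_cons_of_mem hy)))
      calc (d:ℝ) < x := h1x
        _ = x * 1 := (mul_one x).symm
        _ ≤ x * T'.prod := by
            refine mul_le_mul_of_nonneg_left hT'1 ?_
            linarith
    have habs2 : |((q.eval (m:ℤ) : ℤ) : ℝ)| = Complex.abs Q.leadingCoeff * T.prod := by
      rw [← Complex.abs_intCast, heval, hevalprod, map_mul]
      congr 1
      rw [map_multiset_prod Complex.abs, Multiset.map_map]
      rfl
    rw [habs2]
    calc (d:ℝ) < T.prod := hTprod
      _ = 1 * T.prod := (one_mul _).symm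
      _ ≤ Complex.abs Q.leadingCoeff * T.prod :=
          mul_le_mul_of_nonneg_right hlc (by linarith)
  -- nonunit factors have positive degree
  have hfacdeg : ∀ u v : Polynomial ℤ, f = u * v → ¬IsUnit v → 1 ≤ v.natDegree := by
    intro u v huv hv
    by_contra hc
    push_neg at hc
    have hv0 : v.natDegree = 0 := by omega
    have h0 : v = C (v.coeff 0) := eq_C_of_natDegree_eq_zero hv0
    have hdvd : C (v.coeff 0) ∣ f := by
      rw [← h0]; exact ⟨u, by rw [huv, mul_comm]⟩
    exact hv (h0 ▸ isUnit_C.mpr (hprim (v.coeff 0) hdvd))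
  -- the key contradiction
  have key : ∀ u v : Polynomial ℤ, f = u * v → ¬IsUnit u → ¬IsUnit v →
      (p:ℤ) ∣ u.eval (m:ℤ) → False := by
    intro u v huv hu hv hpu
    have hv1 : 1 ≤ v.natDegree := hfacdeg u v huv hv
    have hgt := hdiv v ⟨u, by rw [huv, mul_comm]⟩ hv1
    have hp0 : (p:ℤ) ≠ 0 := by exact_mod_cast hp.ne_zero
    obtain ⟨k, hk⟩ := hpu
    have hvdvd : v.eval (m:ℤ) ∣ (d:ℤ) := by
      rcases hval with h | h
      · rw [huv, eval_mul, hk] at h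
        refine ⟨k, ?_⟩
        have h2 : (p:ℤ) * ((d:ℤ)) = (p:ℤ) * (v.eval (m:ℤ) * k) := by ring_nf; linarith [h]
        exact (mul_left_cancel₀ hp0 h2)
      · rw [huv, eval_mul, hk] at h
        refine dvd_neg.mp ⟨k, ?_⟩
        have h2 : (p:ℤ) * (-(d:ℤ)) = (p:ℤ) * (v.eval (m:ℤ) * k) := by ring_nf; linarith [h]
        exact (mul_left_cancel₀ hp0 h2)
    have hle : |v.eval (m:ℤ)| ≤ (d:ℤ) :=
      Int.le_of_dvd (by exact_mod_cast hd) ((abs_dvd _ _).mpr hvdvd)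
    have hleR : |((v.eval (m:ℤ) : ℤ) : ℝ)| ≤ (d:ℝ) := by
      have : ((|v.eval (m:ℤ)| : ℤ) : ℝ) ≤ ((d:ℤ) : ℝ) := by exact_mod_cast hle
      push_cast at this
      linarith [this]
    linarith
  -- conclude
  apply (Polynomial.IsPrimitive.Int.irreducible_iff_irreducible_map_cast hprim).mp
  constructor
  · intro hu
    have := Polynomial.natDegree_eq_zero_of_isUnit hu
    omega
  · intro a b hab
    by_contra hcon
    push_neg at hcon
    obtain ⟨ha, hb⟩ := hcon
    have hpZ : Prime ((p:ℤ)) := Nat.prime_iff_prime_int.mp hp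
    have hdvd : (p:ℤ) ∣ a.eval (m:ℤ) * b.eval (m:ℤ) := by
      rw [← eval_mul, ← hab]
      rcases hval with h | h
      · rw [h]; exact ⟨d, by ring⟩
      · rw [h]; exact ⟨-d, by ring⟩
    rcases hpZ.dvd_mul.mp hdvd with h | h
    · exact key a b hab ha hb h
    · exact key b a (by rw [hab, mul_comm]) hb ha h
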